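/- arXiv:1711.11448 — 3 statements merged into one kernel-verified Lean document; each statement's English description precedes it below -/
import Mathlib

section
/- Let C_n^φ be a T-gain cycle of order n, with n even and cycle gain φ(C_n) ≠ (-1)^{n/2} (Type B). Then A(C_n^φ) is nonsingular, i.e., rank(A(C_n^φ)) = n. -/
open Matrix
open scoped Classical

structure GainGraph (V : Type*) [Fintype V] [DecidableEq V] where
  G : SimpleGraph V
  gain : V → V → ℂ
  gain_unit : ∀ i j, G.Adj i j → ‖gain i j‖ = 1
  gain_conj : ∀ i j, gain j i = starRingEnd ℂ (gain i j)

variable {V : Type*} [Fintype V] [DecidableEq V]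

noncomputable def GainGraph.A (Φ : GainGraph V) : Matrix V V ℂ :=
  fun i j => if Φ.G.Adj i j then Φ.gain i j else 0

theorem GainGraph.isHermitian (Φ : GainGraph V) : Φ.A.IsHermitian := by
  unfold Matrix.IsHermitian
  ext i j
  by_cases h : Φ.G.Adj i j
  · have h' : Φ.G.Adj j i := h.symm
    simp [Matrix.conjTranspose_apply, GainGraph.A, h, h', ← Φ.gain_conj]
  · have h' : ¬ Φ.G.Adj j i := fun hh => h hh.symm
    simp [Matrix.conjTranspose_apply, GainGraph.A, h, h']

noncomputable def GainGraph.iPos (Φ : GainGraph V) : ℕ :=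
  Nat.card {i // 0 < Φ.isHermitian.eigenvalues i}

noncomputable def GainGraph.iNeg (Φ : GainGraph V) : ℕ :=
  Nat.card {i // Φ.isHermitian.eigenvalues i < 0}

noncomputable def GainGraph.nullity (Φ : GainGraph V) : ℕ :=
  Nat.card {i // Φ.isHermitian.eigenvalues i = 0}

noncomputable def grank (G : SimpleGraph V) : ℕ := (G.adjMatrix ℂ).rank

noncomputable def theta (G : SimpleGraph V) : ℤ :=
  (G.edgeSet.ncard : ℤ) - (Fintype.card V : ℤ) + (Nat.card G.ConnectedComponent : ℤ)

def GainGraph.induce (Φ : GainGraph V) (S : Set V) [Fintype S] : GainGraph S where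
  G := Φ.G.induce S
  gain := fun i j => Φ.gain i j
  gain_unit := fun i j h => Φ.gain_unit i j (by simpa using h)
  gain_conj := fun i j => Φ.gain_conj i j

noncomputable def GainGraph.delete (Φ : GainGraph V) (v : V) : GainGraph {u : V | u ≠ v} :=
  Φ.induce {u : V | u ≠ v}

noncomputable def GainGraph.walkGain (Φ : GainGraph V) {u v : V} (w : Φ.G.Walk u v) : ℂ :=
  (w.darts.map (fun d => Φ.gain d.toProd.1 d.toProd.2)).prod

def OnCycle (G : SimpleGraph V) (v : V) : Prop :=
  ∃ (w : V) (c : G.Walk w w), c.IsCycle ∧ v ∈ c.support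

def CyclesVertexDisjoint (G : SimpleGraph V) : Prop :=
  ∀ ⦃u v : V⦄ (c : G.Walk u u) (d : G.Walk v v), c.IsCycle → d.IsCycle →
    {e : Sym2 V | e ∈ c.edges} ≠ {e : Sym2 V | e ∈ d.edges} →
    Disjoint {x : V | x ∈ c.support} {x : V | x ∈ d.support}

def IsCycleSet (G : SimpleGraph V) (s : Set (Sym2 V)) : Prop :=
  ∃ (v : V) (c : G.Walk v v), c.IsCycle ∧ s = {e : Sym2 V | e ∈ c.edges}

def GainGraph.LowerOptimal (Φ : GainGraph V) : Prop :=
  (Φ.A.rank : ℤ) = (grank Φ.G : ℤ) - 2 * theta Φ.G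

def GainGraph.UpperOptimal (Φ : GainGraph V) : Prop :=
  (Φ.A.rank : ℤ) = (grank Φ.G : ℤ) + 2 * theta Φ.G

/-! Label the cycle periodically, `f k = c.getCycleVert k`, and put `g k = gain (f k) (f (k + 1))`.
The row of `A` at `f (k + 1)` only sees `f k` and `f (k + 2)`, so a kernel vector `x` satisfies
`conj (g k) * x (f k) + g (k + 1) * x (f (k + 2)) = 0`, i.e.
`x (f k) + g k * g (k + 1) * x (f (k + 2)) = 0` since the gains are unit complex numbers. With the
partial products `P k = g 0 * ⋯ * g (k - 1)`, the sequence `P k * x (f k)` changes sign at every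
double step, so once around the cycle of length `2 m` multiplies it by `(-1) ^ m`. By periodicity
this factor is also `P (2 m)`, the cycle gain; as the two differ, `x = 0`. -/

namespace SimpleGraph.Walk

variable {α : Type*} {G : SimpleGraph α} {u : α} {c : G.Walk u u}

def getCycleVert (c : G.Walk u u) (k : ℕ) : α := c.getVert (k % c.length)

theorem getCycleVert_add_length (k : ℕ) : c.getCycleVert (k + c.length) = c.getCycleVert k := by
  simp [getCycleVert]

theorem getCycleVert_congr {a b : ℕ} (h : a ≡ b [MOD c.length]) :
    c.getCycleVert a = c.getCycleVert b :=
  congrArg c.getVert h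

theorem getCycleVert_of_le_length {k : ℕ} (hk : k ≤ c.length) : c.getCycleVert k = c.getVert k := by
  rcases hk.lt_or_eq with hk | rfl
  · rw [getCycleVert, Nat.mod_eq_of_lt hk]
  · rw [getCycleVert, Nat.mod_self, getVert_zero, getVert_length]

theorem adj_getCycleVert_succ (hc : ¬ c.Nil) (k : ℕ) :
    G.Adj (c.getCycleVert k) (c.getCycleVert (k + 1)) := by
  have hk := Nat.mod_lt k (not_nil_iff_lt_length.mp hc)
  rw [getCycleVert_congr ((Nat.mod_modEq k _).add_right 1).symm, getCycleVert_of_le_length hk]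
  exact c.adj_getVert_succ hk

theorem exists_getCycleVert_eq_of_mem_support {w : α} (hw : w ∈ c.support) :
    ∃ k, c.getCycleVert k = w := by
  obtain ⟨k, rfl, hk⟩ := mem_support_iff_exists_getVert.mp hw
  exact ⟨k, getCycleVert_of_le_length hk⟩

theorem exists_getCycleVert_of_mk_mem_edges {a b : α} (h : s(a, b) ∈ c.edges) :
    ∃ k, s(c.getCycleVert k, c.getCycleVert (k + 1)) = s(a, b) := by
  obtain ⟨k, hk, he⟩ := (mk_mem_edges_iff_exists c).mp h
  exact ⟨k, by rw [getCycleVert_of_le_length hk.le, getCycleVert_of_le_length hk, he]⟩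

theorem IsCycle.getCycleVert_eq_iff (hc : c.IsCycle) {a b : ℕ} :
    c.getCycleVert a = c.getCycleVert b ↔ a ≡ b [MOD c.length] := by
  have hpos : 0 < c.length := by have := hc.three_le_length; omega
  refine ⟨fun h => hc.getVert_injOn' ?_ ?_ h, getCycleVert_congr⟩ <;>
    simp only [Set.mem_ofPred_eq] <;> have := Nat.mod_lt a hpos <;> have := Nat.mod_lt b hpos <;>
    omega

theorem IsCycle.getCycleVert_ne_add_two (hc : c.IsCycle) (k : ℕ) :
    c.getCycleVert k ≠ c.getCycleVert (k + 2) := by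
  rw [Ne, hc.getCycleVert_eq_iff]
  intro h
  have h2 : c.length ∣ 2 := by simpa using (Nat.modEq_iff_dvd' (Nat.le_add_right k 2)).mp h
  have := Nat.le_of_dvd two_pos h2
  have := hc.three_le_length
  omega

theorem IsCycle.eq_or_eq_of_adj_getCycleVert (hc : c.IsCycle)
    (hedge : G.edgeSet ⊆ c.edgeSet) {k : ℕ} {w : α}
    (hw : G.Adj (c.getCycleVert (k + 1)) w) :
    w = c.getCycleVert k ∨ w = c.getCycleVert (k + 2) := by
  obtain ⟨i, hi⟩ := exists_getCycleVert_of_mk_mem_edges (hedge hw)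
  rcases Sym2.eq_iff.mp hi with ⟨hik, hiw⟩ | ⟨hiw, hik⟩
  · exact .inr (hiw ▸ getCycleVert_congr ((hc.getCycleVert_eq_iff.mp hik).add_right 1))
  · exact .inl (hiw ▸ getCycleVert_congr ((hc.getCycleVert_eq_iff.mp hik).add_right_cancel' 1))

theorem IsCycle.length_eq_card [Fintype α] [DecidableEq α] (hc : c.IsCycle)
    (hspan : ∀ w, w ∈ c.support) : c.length = Fintype.card α := by
  refine IsHamiltonianCycle.length_eq ⟨hc, hc.isPath_tail.isHamiltonian_of_mem fun w => ?_⟩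
  rcases List.mem_cons.mp (c.cons_tail_support ▸ hspan w) with rfl | h
  · exact c.tail.end_mem_support
  · rwa [support_tail_of_not_nil _ hc.not_nil]

end SimpleGraph.Walk

open Finset in
theorem eq_zero_of_add_mul_mul_add_two_eq_zero {R : Type*} [CommRing R] [IsDomain R]
    {g y : ℕ → R} {m : ℕ} (hg : ∀ k, g k ≠ 0) (hg_per : Function.Periodic g (2 * m))
    (hy_per : Function.Periodic y (2 * m)) (hrec : ∀ k, y k + g k * g (k + 1) * y (k + 2) = 0)
    (hprod : ∏ k ∈ range (2 * m), g k ≠ (-1) ^ m) : y = 0 := by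
  set P : ℕ → R := fun k => ∏ j ∈ range k, g j with hP
  have hP_succ : ∀ k, P (k + 1) = P k * g k := fun k => prod_range_succ g k
  have hP_ne : ∀ k, P k ≠ 0 := fun k => prod_ne_zero_iff.mpr fun j _ => hg j
  have hP_add : ∀ k, P (k + 2 * m) = P k * P (2 * m) := by
    intro k
    induction k with
    | zero => simp [hP]
    | succ k ih => rw [Nat.add_right_comm, hP_succ, ih, hg_per, hP_succ]; ring
  have hz : ∀ k, P (k + 2) * y (k + 2) = -(P k * y k) := by
    intro k
    rw [hP_succ, hP_succ]
    linear_combination P k * hrec k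
  have hz_iter : ∀ j k, P (k + 2 * j) * y (k + 2 * j) = (-1) ^ j * (P k * y k) := by
    intro j k
    induction j with
    | zero => simp
    | succ j ih => rw [show k + 2 * (j + 1) = k + 2 * j + 2 by ring, hz, ih]; ring
  funext k
  have h := hz_iter m k
  rw [hP_add, hy_per] at h
  have : (P (2 * m) - (-1) ^ m) * (P k * y k) = 0 := by linear_combination h
  exact (mul_eq_zero.mp ((mul_eq_zero.mp this).resolve_left (sub_ne_zero.mpr hprod))).resolve_left
    (hP_ne k)

theorem Matrix.rank_eq_card_of_forall_mulVec_eq_zero {n K : Type*} [Fintype n] [DecidableEq n]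
    [Field K] {A : Matrix n n K} (h : ∀ x, A *ᵥ x = 0 → x = 0) : A.rank = Fintype.card n :=
  A.rank_of_isUnit <| mulVec_injective_iff_isUnit.mp <| (injective_iff_map_eq_zero A.mulVecLin).mpr h

namespace GainGraph

variable (Φ : GainGraph V)

theorem gain_mul_conj_of_adj {i j : V} (h : Φ.G.Adj i j) :
    Φ.gain i j * starRingEnd ℂ (Φ.gain i j) = 1 := by
  rw [RCLike.mul_conj, Φ.gain_unit i j h]; norm_num

theorem gain_ne_zero_of_adj {i j : V} (h : Φ.G.Adj i j) : Φ.gain i j ≠ 0 :=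
  left_ne_zero_of_mul_eq_one (Φ.gain_mul_conj_of_adj h)

theorem A_mulVec_apply_of_neighbors {w a b : V} (hab : a ≠ b) (ha : Φ.G.Adj w a)
    (hb : Φ.G.Adj w b) (hnbr : ∀ u, Φ.G.Adj w u → u = a ∨ u = b) (x : V → ℂ) :
    (Φ.A *ᵥ x) w = Φ.gain w a * x a + Φ.gain w b * x b := by
  rw [mulVec, dotProduct, ← Finset.sum_subset (Finset.subset_univ {a, b}), Finset.sum_pair hab]
  · simp [A, ha, hb]
  · intro u _ hu
    have hwu : ¬ Φ.G.Adj w u := fun h => hu (by rcases hnbr u h with rfl | rfl <;> simp)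
    simp [A, hwu]

theorem walkGain_eq_prod {u v : V} (p : Φ.G.Walk u v) :
    Φ.walkGain p = ∏ i ∈ Finset.range p.length, Φ.gain (p.getVert i) (p.getVert (i + 1)) := by
  induction p with
  | nil => simp [walkGain]
  | cons h q ih =>
      rw [walkGain] at *
      simp only [SimpleGraph.Walk.darts_cons, List.map_cons, List.prod_cons,
        SimpleGraph.Walk.length_cons]
      rw [Finset.prod_range_succ', ih]
      simp [SimpleGraph.Walk.getVert_cons_succ, mul_comm]

theorem walkGain_eq_prod_getCycleVert {v : V} (c : Φ.G.Walk v v) :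
    Φ.walkGain c = ∏ k ∈ Finset.range c.length,
      Φ.gain (c.getCycleVert k) (c.getCycleVert (k + 1)) := by
  rw [walkGain_eq_prod]
  refine Finset.prod_congr rfl fun k hk => ?_
  have hk := Finset.mem_range.mp hk
  rw [c.getCycleVert_of_le_length hk.le, c.getCycleVert_of_le_length hk]

theorem add_mul_mul_add_two_eq_zero_of_mulVec_eq_zero {v : V} {c : Φ.G.Walk v v} (hc : c.IsCycle)
    (hedge : Φ.G.edgeSet ⊆ c.edgeSet) {x : V → ℂ} (hx : Φ.A *ᵥ x = 0) (k : ℕ) :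
    x (c.getCycleVert k) + Φ.gain (c.getCycleVert k) (c.getCycleVert (k + 1)) *
      Φ.gain (c.getCycleVert (k + 1)) (c.getCycleVert (k + 2)) * x (c.getCycleVert (k + 2)) = 0 := by
  have hprev := c.adj_getCycleVert_succ hc.not_nil k
  have hrow := Φ.A_mulVec_apply_of_neighbors (hc.getCycleVert_ne_add_two k) hprev.symm
    (c.adj_getCycleVert_succ hc.not_nil (k + 1)) (fun _ => hc.eq_or_eq_of_adj_getCycleVert hedge) x
  rw [hx, Pi.zero_apply, Φ.gain_conj] at hrow
  linear_combination (Φ.gain (c.getCycleVert k) (c.getCycleVert (k + 1))) * hrow.symm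
    - x (c.getCycleVert k) * Φ.gain_mul_conj_of_adj hprev

end GainGraph

theorem stmt8 (Φ : GainGraph V) (v : V) (c : Φ.G.Walk v v) (hc : c.IsCycle)
    (hspan : ∀ u, u ∈ c.support)
    (hedge : Φ.G.edgeSet = {e : Sym2 V | e ∈ c.edges})
    (hn : Even (Fintype.card V))
    (hgain : Φ.walkGain c ≠ (-1 : ℂ) ^ (Fintype.card V / 2)) :
    Φ.A.rank = Fintype.card V := by
  obtain ⟨m, hm⟩ := hn
  have hlen : c.length = 2 * m := by rw [hc.length_eq_card hspan, hm, two_mul]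
  refine Matrix.rank_eq_card_of_forall_mulVec_eq_zero fun x hx => ?_
  have hy := eq_zero_of_add_mul_mul_add_two_eq_zero (m := m) (y := fun k => x (c.getCycleVert k))
    (g := fun k => Φ.gain (c.getCycleVert k) (c.getCycleVert (k + 1)))
    (fun k => Φ.gain_ne_zero_of_adj (c.adj_getCycleVert_succ hc.not_nil k))
    (fun k => by simp only [Nat.add_right_comm k, ← hlen, c.getCycleVert_add_length])
    (fun k => by simp only [← hlen, c.getCycleVert_add_length])
    (Φ.add_mul_mul_add_two_eq_zero_of_mulVec_eq_zero hc hedge.subset hx)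
    (by rwa [← hlen, ← Φ.walkGain_eq_prod_getCycleVert, show m = Fintype.card V / 2 by omega])
  funext w
  obtain ⟨k, rfl⟩ := c.exists_getCycleVert_eq_of_mem_support (hspan w)
  exact congrFun hy k
end

section
/- Let G be a finite simple graph in which all cycles are pairwise vertex-disjoint. Then θ(G) equals the number of distinct cycles of G. -/
open Matrix
open scoped Classical

variable {V : Type*} [Fintype V] [DecidableEq V]

/-
Induction on the number of edges, deleting one edge `e` at a time. If `e` is a bridge, the
deletion adds a connected component and destroys no cycle, so neither side changes. Otherwise
`e` lies on a cycle, the components stay the same and `θ` drops by one; as cycles are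
vertex-disjoint, the cycle through `e` is unique, so the number of cycles drops by one too.
-/

theorem Nat.card_subtype_ne_add_one {α : Type*} [Finite α] (a : α) :
    Nat.card {x // x ≠ a} + 1 = Nat.card α := by
  rw [← Set.ncard_univ α, ← Set.ncard_sdiff_singleton_add_one (Set.mem_univ a),
    ← Nat.card_coe_set_eq]
  exact congrArg (· + 1) (Nat.card_congr (Equiv.subtypeEquivRight fun x => by simp))

open SimpleGraph

section

-- Rebinding `V` keeps the ambient `[Fintype V] [DecidableEq V]` out of the lemmas below.
variable {V : Type*}

namespace SimpleGraph

variable {G : SimpleGraph V} {u v : V}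

theorem Walk.reachable_deleteEdges_singleton_or {a b : V} (p : G.Walk a b) :
    (G.deleteEdges {s(u, v)}).Reachable a b ∨
      (G.deleteEdges {s(u, v)}).Reachable a u ∧ (G.deleteEdges {s(u, v)}).Reachable v b ∨
      (G.deleteEdges {s(u, v)}).Reachable a v ∧ (G.deleteEdges {s(u, v)}).Reachable u b := by
  induction p with
  | nil => exact Or.inl .rfl
  | @cons x y z hxy q ih =>
    by_cases he : s(x, y) = s(u, v)
    · rcases Sym2.eq_iff.mp he with ⟨rfl, rfl⟩ | ⟨rfl, rfl⟩
      · rcases ih with h | ⟨h₁, h₂⟩ | ⟨_, h₂⟩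
        · exact Or.inr (Or.inl ⟨.rfl, h⟩)
        · exact Or.inl (h₁.symm.trans h₂)
        · exact Or.inl h₂
      · rcases ih with h | ⟨_, h₂⟩ | ⟨h₁, h₂⟩
        · exact Or.inr (Or.inr ⟨.rfl, h⟩)
        · exact Or.inl h₂
        · exact Or.inl (h₁.symm.trans h₂)
    · have hxy' : (G.deleteEdges {s(u, v)}).Adj x y := by simpa [he] using hxy
      rcases ih with h | ⟨h₁, h₂⟩ | ⟨h₁, h₂⟩
      · exact Or.inl (hxy'.reachable.trans h)
      · exact Or.inr (Or.inl ⟨hxy'.reachable.trans h₁, h₂⟩)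
      · exact Or.inr (Or.inr ⟨hxy'.reachable.trans h₁, h₂⟩)

theorem Reachable.deleteEdges_of_not_isBridge (h : ¬ G.IsBridge s(u, v)) {a b : V}
    (hab : G.Reachable a b) : (G.deleteEdges {s(u, v)}).Reachable a b := by
  rw [isBridge_iff, not_not] at h
  obtain ⟨p⟩ := hab
  rcases p.reachable_deleteEdges_singleton_or with hab | ⟨h₁, h₂⟩ | ⟨h₁, h₂⟩
  · exact hab
  · exact h₁.trans (h.trans h₂)
  · exact h₁.trans (h.symm.trans h₂)

theorem card_connectedComponent_deleteEdges_of_not_isBridge [Finite V]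
    (h : ¬ G.IsBridge s(u, v)) :
    Nat.card (G.deleteEdges {s(u, v)}).ConnectedComponent = Nat.card G.ConnectedComponent := by
  refine Nat.card_eq_of_bijective _
    ⟨fun c₁ c₂ => ?_, ConnectedComponent.surjective_map_ofLE (G.deleteEdges_le _)⟩
  induction c₁, c₂ using ConnectedComponent.ind₂ with
  | h a b =>
    simp only [ConnectedComponent.map_mk, Hom.ofLE_apply, ConnectedComponent.eq]
    exact Reachable.deleteEdges_of_not_isBridge h

theorem card_connectedComponent_deleteEdges_of_isBridge [Finite V] (huv : G.Adj u v)
    (h : G.IsBridge s(u, v)) :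
    Nat.card (G.deleteEdges {s(u, v)}).ConnectedComponent = Nat.card G.ConnectedComponent + 1 := by
  set H := G.deleteEdges {s(u, v)}
  rw [isBridge_iff] at h
  let f (c : {c : H.ConnectedComponent // c ≠ H.connectedComponentMk v}) : G.ConnectedComponent :=
    c.1.map (Hom.ofLE (G.deleteEdges_le _))
  have hf (a : V) (ha) : f ⟨H.connectedComponentMk a, ha⟩ = G.connectedComponentMk a := rfl
  rw [← Nat.card_subtype_ne_add_one (H.connectedComponentMk v)]
  refine congrArg (· + 1) (Nat.card_eq_of_bijective f ⟨?_, ?_⟩)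
  · rintro ⟨c₁, hc₁⟩ ⟨c₂, hc₂⟩ hfc
    induction c₁, c₂ using ConnectedComponent.ind₂ with
    | h a b =>
      rw [hf, hf, ConnectedComponent.eq] at hfc
      rw [ne_eq, ConnectedComponent.eq] at hc₁ hc₂
      obtain ⟨p⟩ := hfc
      rcases p.reachable_deleteEdges_singleton_or with hab | ⟨_, hvb⟩ | ⟨hav, _⟩
      · exact Subtype.ext (ConnectedComponent.eq.mpr hab)
      · exact absurd hvb.symm hc₂
      · exact absurd hav hc₁
  · intro C
    induction C using ConnectedComponent.ind with
    | h w =>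
      by_cases hvw : H.Reachable v w
      · refine ⟨⟨H.connectedComponentMk u, by rwa [ne_eq, ConnectedComponent.eq]⟩, ?_⟩
        rw [hf, ConnectedComponent.eq]
        exact huv.reachable.trans (hvw.mono (G.deleteEdges_le _))
      · refine ⟨⟨H.connectedComponentMk w, ?_⟩, hf w _⟩
        rwa [ne_eq, ConnectedComponent.eq, reachable_comm]

end SimpleGraph

theorem theta_bot [Fintype V] : theta (⊥ : SimpleGraph V) = 0 := by
  have hcc : Nat.card (⊥ : SimpleGraph V).ConnectedComponent = Fintype.card V := by
    rw [← Nat.card_eq_fintype_card]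
    refine (Nat.card_eq_of_bijective (⊥ : SimpleGraph V).connectedComponentMk ⟨?_, ?_⟩).symm
    · exact fun x y hxy => reachable_bot.mp (ConnectedComponent.eq.mp hxy)
    · exact fun c => c.ind fun x => ⟨x, rfl⟩
  rw [theta, hcc]
  simp

theorem not_isCycleSet_bot (s : Set (Sym2 V)) : ¬ IsCycleSet ⊥ s := by
  rintro ⟨w, c, hc, rfl⟩
  cases c with
  | nil => exact hc.ne_nil rfl
  | cons hadj _ => exact hadj

theorem CyclesVertexDisjoint.anti {G H : SimpleGraph V} (hHG : H ≤ G)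
    (hG : CyclesVertexDisjoint G) : CyclesVertexDisjoint H := by
  intro a b c d hc hd hne
  simpa [Walk.support_mapLe_eq_support] using
    hG (c.mapLe hHG) (d.mapLe hHG) (hc.mapLe hHG) (hd.mapLe hHG)
      (by simpa [Walk.edges_mapLe_eq_edges] using hne)

theorem CyclesVertexDisjoint.eq_of_mem {G : SimpleGraph V} (hG : CyclesVertexDisjoint G)
    {s₁ s₂ : Set (Sym2 V)} (h₁ : IsCycleSet G s₁) (h₂ : IsCycleSet G s₂) {e : Sym2 V}
    (he₁ : e ∈ s₁) (he₂ : e ∈ s₂) : s₁ = s₂ := by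
  obtain ⟨w₁, c₁, hc₁, rfl⟩ := h₁
  obtain ⟨w₂, c₂, hc₂, rfl⟩ := h₂
  by_contra hne
  induction e using Sym2.ind with
  | _ x y =>
    exact Set.disjoint_left.mp (hG c₁ c₂ hc₁ hc₂ hne)
      (c₁.fst_mem_support_of_mem_edges he₁) (c₂.fst_mem_support_of_mem_edges he₂)

theorem isCycleSet_deleteEdges_iff {G : SimpleGraph V} {t s : Set (Sym2 V)} :
    IsCycleSet (G.deleteEdges t) s ↔ IsCycleSet G s ∧ Disjoint s t := by
  constructor
  · rintro ⟨w, c, hc, rfl⟩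
    refine ⟨⟨w, c.mapLe (G.deleteEdges_le t), hc.mapLe _, by simp⟩, ?_⟩
    exact Set.disjoint_left.mpr fun e he =>
      (edgeSet_deleteEdges t ▸ c.edges_subset_edgeSet he).2
  · rintro ⟨⟨w, c, hc, rfl⟩, hdisj⟩
    have hno : ∀ e ∈ c.edges, e ∉ t := fun e he => Set.disjoint_left.mp hdisj he
    exact ⟨w, c.toDeleteEdges t hno, hc.toDeleteEdges _ t hno, by simp [Walk.toDeleteEdges]⟩

theorem setOf_isCycleSet_deleteEdges_of_isBridge {G : SimpleGraph V} {e : Sym2 V}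
    (h : G.IsBridge e) : {s | IsCycleSet (G.deleteEdges {e}) s} = {s | IsCycleSet G s} := by
  ext s
  simp only [Set.mem_ofPred_eq, isCycleSet_deleteEdges_iff, Set.disjoint_singleton_right,
    and_iff_left_iff_imp]
  rintro ⟨w, c, hc, rfl⟩
  exact h.notMem_edges_of_isCycle hc

theorem CyclesVertexDisjoint.setOf_isCycleSet_deleteEdges {G : SimpleGraph V}
    (hG : CyclesVertexDisjoint G) {s₀ : Set (Sym2 V)} (hs₀ : IsCycleSet G s₀) {e : Sym2 V}
    (he : e ∈ s₀) :
    {s | IsCycleSet (G.deleteEdges {e}) s} = {s | IsCycleSet G s} \ {s₀} := by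
  ext s
  simp only [Set.mem_ofPred_eq, isCycleSet_deleteEdges_iff, Set.disjoint_singleton_right,
    Set.mem_sdiff, Set.mem_singleton_iff]
  refine and_congr_right fun hs => ⟨?_, fun hne hes => hne (hG.eq_of_mem hs hs₀ hes he)⟩
  rintro hes rfl
  exact hes he

theorem CyclesVertexDisjoint.theta_sub_card_deleteEdges [Fintype V] {G : SimpleGraph V}
    (hG : CyclesVertexDisjoint G) {u v : V} (huv : G.Adj u v) :
    theta (G.deleteEdges {s(u, v)}) - Nat.card {s // IsCycleSet (G.deleteEdges {s(u, v)}) s} =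
      theta G - Nat.card {s // IsCycleSet G s} := by
  have hcard (H : SimpleGraph V) : Nat.card {s // IsCycleSet H s} = {s | IsCycleSet H s}.ncard :=
    Nat.card_coe_set_eq _
  have hedges : (G.deleteEdges {s(u, v)}).edgeSet.ncard + 1 = G.edgeSet.ncard := by
    rw [edgeSet_deleteEdges, Set.ncard_sdiff_singleton_add_one (G.mem_edgeSet.mpr huv)]
  simp only [theta, hcard]
  by_cases hb : G.IsBridge s(u, v)
  · rw [card_connectedComponent_deleteEdges_of_isBridge huv hb,
      setOf_isCycleSet_deleteEdges_of_isBridge hb]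
    omega
  · obtain ⟨w, c, hc, he⟩ := adj_and_reachable_delete_edges_iff_exists_cycle.mp
      ⟨huv, by simpa [isBridge_iff] using hb⟩
    have hs₀ : IsCycleSet G {e | e ∈ c.edges} := ⟨w, c, hc, rfl⟩
    rw [card_connectedComponent_deleteEdges_of_not_isBridge hb,
      hG.setOf_isCycleSet_deleteEdges hs₀ he,
      ← Set.ncard_sdiff_singleton_add_one (s := {s | IsCycleSet G s}) hs₀]
    omega

end

theorem stmt11 (G : SimpleGraph V) (h : CyclesVertexDisjoint G) :
    theta G = (Nat.card {s : Set (Sym2 V) // IsCycleSet G s} : ℤ) := by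
  obtain ⟨n, hn⟩ : ∃ n, G.edgeSet.ncard = n := ⟨_, rfl⟩
  induction n generalizing G with
  | zero =>
    obtain rfl : G = ⊥ := edgeSet_eq_empty.mp ((Set.ncard_eq_zero (Set.toFinite _)).mp hn)
    simp [theta_bot, not_isCycleSet_bot]
  | succ n ih =>
    obtain ⟨e, he⟩ := Set.nonempty_of_ncard_ne_zero (s := G.edgeSet) (by omega)
    induction e using Sym2.ind with
    | _ u v =>
      have hstep := h.theta_sub_card_deleteEdges (G.mem_edgeSet.mp he)
      have hdel := ih _ (h.anti (G.deleteEdges_le _))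
        (by rw [edgeSet_deleteEdges, Set.ncard_sdiff_singleton_of_mem he, hn, Nat.add_sub_cancel])
      omega
end

section
/- Let Φ = (G, φ) be a T-gain graph with underlying simple graph G. Then r(G) - 2θ(G) ≤ r(Φ) ≤ r(G) + 2θ(G), where r(Φ) = rank(A(Φ)), r(G) = rank(A(G)), and θ(G) = |E(G)| - |V(G)| + ω(G). -/
open Matrix
open scoped Classical

variable {V : Type*} [Fintype V] [DecidableEq V]

/-!
Grow a BFS spanning forest `F` of `G` and define a unit potential `f` on the vertices along it,
`f v = φ(parent v, v) · f (parent v)`, with `f = 1` at the roots. The switched matrix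
`N = diag(f̄) A(G) diag(f)` has the rank of `A(G)` and agrees with `A(Φ)` on the `|V| - ω(G)` edges
of `F`, so `A(Φ) - N` is supported on the remaining `θ(G)` edges and has rank at most `2θ(G)`.
Subadditivity of rank then gives both inequalities.
-/

open Finset

namespace Matrix

theorem rank_add_le {K m n : Type*} [Field K] [Fintype n] (A B : Matrix m n K) :
    (A + B).rank ≤ A.rank + B.rank := by
  have h : LinearMap.range (A + B).mulVecLin ≤
      LinearMap.range A.mulVecLin ⊔ LinearMap.range B.mulVecLin := by
    rintro x ⟨v, rfl⟩
    rw [Matrix.mulVecLin_add]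
    exact Submodule.add_mem_sup ⟨v, rfl⟩ ⟨v, rfl⟩
  exact (Submodule.finrank_mono h).trans (Submodule.finrank_add_le_finrank_add_finrank _ _)

theorem rank_neg {R m n : Type*} [CommRing R] [Fintype n] (A : Matrix m n R) :
    (-A).rank = A.rank := by
  simpa using rank_smul_of_mem_nonZeroDivisors A (isUnit_one.neg.mem_nonZeroDivisors)

theorem rank_le_rank_add_rank_sub {K m n : Type*} [Field K] [Fintype n] (A B : Matrix m n K) :
    A.rank ≤ B.rank + (A - B).rank := by
  simpa using rank_add_le B (A - B)

theorem rank_le_two_mul_card_of_ne_zero_mem {R n : Type*} [CommSemiring R] [StrongRankCondition R]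
    [Fintype n] [DecidableEq n] (A : Matrix n n R) (T : Finset (Sym2 n))
    (hA : ∀ i j, A i j ≠ 0 → s(i, j) ∈ T) : A.rank ≤ 2 * #T := by
  calc A.rank ≤ #(T.biUnion Sym2.toFinset) := by
        refine A.rank_le_card_of_support_subset _ fun i hi => ?_
        obtain ⟨j, hj⟩ := Function.ne_iff.mp hi
        simpa using ⟨_, hA i j hj, Sym2.mem_mk_left i j⟩
    _ ≤ ∑ e ∈ T, #e.toFinset := card_biUnion_le
    _ ≤ ∑ _e ∈ T, 2 := sum_le_sum fun e _ => by rw [Sym2.card_toFinset]; split_ifs <;> simp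
    _ = 2 * #T := by rw [sum_const, smul_eq_mul, mul_comm]

theorem rank_diagonal_mul_mul_diagonal {R n : Type*} [CommRing R] [Fintype n] [DecidableEq n]
    {d₁ d₂ : n → R} (h₁ : ∀ i, IsUnit (d₁ i)) (h₂ : ∀ i, IsUnit (d₂ i)) (A : Matrix n n R) :
    (diagonal d₁ * A * diagonal d₂).rank = A.rank := by
  have hdet : ∀ d : n → R, (∀ i, IsUnit (d i)) → IsUnit (diagonal d).det := fun d hd => by
    simpa [det_diagonal] using IsUnit.prod_univ_iff.mpr hd
  rw [rank_mul_eq_left_of_isUnit_det _ _ (hdet d₂ h₂),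
    rank_mul_eq_right_of_isUnit_det _ _ (hdet d₁ h₁)]

end Matrix

namespace SimpleGraph

variable {α : Type*} (G : SimpleGraph α)

noncomputable def bfsRoot (v : α) : α := (G.connectedComponentMk v).out

theorem reachable_bfsRoot (v : α) : G.Reachable (G.bfsRoot v) v :=
  ConnectedComponent.exact (G.connectedComponentMk v).out_eq

theorem bfsRoot_eq_of_adj {u v : α} (h : G.Adj u v) : G.bfsRoot u = G.bfsRoot v := by
  rw [bfsRoot, bfsRoot, ConnectedComponent.sound h.reachable]

noncomputable def bfsDepth (v : α) : ℕ := G.dist (G.bfsRoot v) v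

theorem bfsDepth_eq_zero_iff {v : α} : G.bfsDepth v = 0 ↔ G.bfsRoot v = v :=
  (G.reachable_bfsRoot v).dist_eq_zero_iff

noncomputable def bfsParent (v : α) : α :=
  (G.reachable_bfsRoot v).exists_walk_length_eq_dist.choose.penultimate

theorem adj_bfsParent {v : α} (h : G.bfsDepth v ≠ 0) : G.Adj (G.bfsParent v) v := by
  have hp := (G.reachable_bfsRoot v).exists_walk_length_eq_dist.choose_spec
  refine Walk.adj_penultimate fun hnil => h ?_
  rw [bfsDepth, ← hp, hnil.length_eq_zero]

theorem bfsDepth_bfsParent_add_one {v : α} (h : G.bfsDepth v ≠ 0) :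
    G.bfsDepth (G.bfsParent v) + 1 = G.bfsDepth v := by
  set p := (G.reachable_bfsRoot v).exists_walk_length_eq_dist.choose
  have hp : p.length = G.bfsDepth v :=
    (G.reachable_bfsRoot v).exists_walk_length_eq_dist.choose_spec
  have hadj := G.adj_bfsParent h
  have hroot : G.bfsRoot (G.bfsParent v) = G.bfsRoot v := G.bfsRoot_eq_of_adj hadj
  have hle : G.bfsDepth (G.bfsParent v) ≤ G.bfsDepth v - 1 := by
    rw [bfsDepth, hroot, ← hp, ← Walk.length_dropLast]
    exact dist_le _
  have hge : G.bfsDepth v ≤ G.bfsDepth (G.bfsParent v) + 1 := by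
    rw [bfsDepth, bfsDepth, hroot, ← dist_eq_one_iff_adj.mpr hadj]
    exact hadj.reachable.dist_triangle_right _
  omega

variable [Fintype α]

theorem card_bfsDepth_eq_zero : #{v | G.bfsDepth v = 0} = Nat.card G.ConnectedComponent := by
  let e : {v // G.bfsDepth v = 0} ≃ G.ConnectedComponent :=
    { toFun := fun v => G.connectedComponentMk v
      invFun := fun c => ⟨c.out, G.bfsDepth_eq_zero_iff.mpr (congrArg Quot.out c.out_eq)⟩
      left_inv := fun v => Subtype.ext (G.bfsDepth_eq_zero_iff.mp v.2)
      right_inv := fun c => c.out_eq }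
  rw [← Nat.card_congr e, Nat.card_eq_fintype_card, Fintype.card_subtype]

variable [DecidableEq α]

noncomputable def bfsEdges : Finset (Sym2 α) :=
  ({v | G.bfsDepth v ≠ 0} : Finset α).image fun v => s(G.bfsParent v, v)

theorem bfsEdges_subset_edgeFinset [Fintype G.edgeSet] : G.bfsEdges ⊆ G.edgeFinset := by
  intro e he
  obtain ⟨v, hv, rfl⟩ := mem_image.mp he
  exact mem_edgeFinset.mpr (G.adj_bfsParent (mem_filter.mp hv).2)

theorem card_bfsEdges : #G.bfsEdges = #{v | G.bfsDepth v ≠ 0} := by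
  refine card_image_of_injOn fun v hv w hw hvw => ?_
  have hv := G.bfsDepth_bfsParent_add_one (mem_filter.mp hv).2
  have hw := G.bfsDepth_bfsParent_add_one (mem_filter.mp hw).2
  rcases Sym2.eq_iff.mp hvw with ⟨-, h⟩ | ⟨h₁, h₂⟩
  · exact h
  · rw [h₁] at hv; rw [← h₂] at hw; omega

theorem card_bfsEdges_add_card_connectedComponent :
    #G.bfsEdges + Nat.card G.ConnectedComponent = Fintype.card α := by
  rw [card_bfsEdges, ← card_bfsDepth_eq_zero, add_comm, card_filter_add_card_filter_not, card_univ]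

end SimpleGraph

theorem theta_eq_card_edgeFinset_sdiff_bfsEdges (G : SimpleGraph V) :
    theta G = #(G.edgeFinset \ G.bfsEdges) := by
  have hcard := G.card_bfsEdges_add_card_connectedComponent
  have hsub := G.bfsEdges_subset_edgeFinset
  rw [theta, ← SimpleGraph.coe_edgeFinset, Set.ncard_coe_finset, card_sdiff_of_subset hsub,
    Nat.cast_sub (card_le_card hsub)]
  omega

open ComplexConjugate

namespace GainGraph

noncomputable def bfsPotential (Φ : GainGraph V) (v : V) : ℂ :=
  if _ : Φ.G.bfsDepth v = 0 then 1
  else Φ.gain (Φ.G.bfsParent v) v * Φ.bfsPotential (Φ.G.bfsParent v)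
termination_by Φ.G.bfsDepth v
decreasing_by exact Nat.lt_of_succ_le (Φ.G.bfsDepth_bfsParent_add_one ‹_›).le

theorem bfsPotential_of_bfsDepth_ne_zero (Φ : GainGraph V) {v : V} (h : Φ.G.bfsDepth v ≠ 0) :
    Φ.bfsPotential v = Φ.gain (Φ.G.bfsParent v) v * Φ.bfsPotential (Φ.G.bfsParent v) := by
  rw [bfsPotential, dif_neg h]

theorem norm_bfsPotential (Φ : GainGraph V) (v : V) : ‖Φ.bfsPotential v‖ = 1 := by
  induction v using GainGraph.bfsPotential.induct Φ with
  | case1 v h => rw [bfsPotential, dif_pos h, norm_one]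
  | case2 v h ih =>
    rw [bfsPotential, dif_neg h, norm_mul, Φ.gain_unit _ _ (Φ.G.adj_bfsParent h), ih, one_mul]

theorem gain_eq_of_mem_bfsEdges (Φ : GainGraph V) {i j : V} (h : s(i, j) ∈ Φ.G.bfsEdges) :
    Φ.gain i j = conj (Φ.bfsPotential i) * Φ.bfsPotential j := by
  obtain ⟨v, hv, hvij⟩ := mem_image.mp h
  set u := Φ.G.bfsParent v
  have hu : Φ.gain u v = conj (Φ.bfsPotential u) * Φ.bfsPotential v := by
    rw [Φ.bfsPotential_of_bfsDepth_ne_zero (mem_filter.mp hv).2, mul_left_comm, Complex.conj_mul',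
      Φ.norm_bfsPotential, Complex.ofReal_one, one_pow, mul_one]
  rcases Sym2.eq_iff.mp hvij with ⟨rfl, rfl⟩ | ⟨rfl, rfl⟩
  · exact hu
  · rw [Φ.gain_conj, hu, map_mul, Complex.conj_conj, mul_comm]

theorem rank_A_sub_switch_le (Φ : GainGraph V) {f : V → ℂ} (T : Finset (Sym2 V))
    (hT : ∀ i j, s(i, j) ∈ T → Φ.gain i j = conj (f i) * f j) :
    (Φ.A - diagonal (star f) * Φ.G.adjMatrix ℂ * diagonal f).rank ≤
      2 * #(Φ.G.edgeFinset \ T) := by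
  refine rank_le_two_mul_card_of_ne_zero_mem _ _ fun i j hij => ?_
  have hentry : (Φ.A - diagonal (star f) * Φ.G.adjMatrix ℂ * diagonal f) i j =
      if Φ.G.Adj i j then Φ.gain i j - conj (f i) * f j else 0 := by
    simp only [Matrix.sub_apply, mul_diagonal, diagonal_mul, SimpleGraph.adjMatrix_apply, A,
      Pi.star_apply]
    split_ifs <;> simp
  rw [hentry] at hij
  split_ifs at hij with hadj
  · refine mem_sdiff.mpr ⟨SimpleGraph.mem_edgeFinset.mpr hadj, fun hT' => hij ?_⟩
    rw [hT i j hT', sub_self]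
  · exact absurd rfl hij

end GainGraph

theorem stmt12 (Φ : GainGraph V) :
    (grank Φ.G : ℤ) - 2 * theta Φ.G ≤ (Φ.A.rank : ℤ) ∧
    (Φ.A.rank : ℤ) ≤ (grank Φ.G : ℤ) + 2 * theta Φ.G := by
  set f := Φ.bfsPotential
  have hf : ∀ v, IsUnit (f v) := fun v =>
    isUnit_iff_ne_zero.mpr (norm_ne_zero_iff.mp (by simp [f, Φ.norm_bfsPotential]))
  set N := diagonal (star f) * Φ.G.adjMatrix ℂ * diagonal f
  have hN : N.rank = grank Φ.G :=
    rank_diagonal_mul_mul_diagonal (fun v => (hf v).star) hf _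
  have hM : ((Φ.A - N).rank : ℤ) ≤ 2 * theta Φ.G := by
    rw [theta_eq_card_edgeFinset_sdiff_bfsEdges]
    exact_mod_cast Φ.rank_A_sub_switch_le _ fun i j h => Φ.gain_eq_of_mem_bfsEdges h
  have hA := rank_le_rank_add_rank_sub Φ.A N
  have hN' := rank_le_rank_add_rank_sub N Φ.A
  rw [← neg_sub, rank_neg] at hN'
  omega
end
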